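/- arXiv:1105.0865 — 2 statements merged into one kernel-verified Lean document; each statement's English description precedes it below -/
import Mathlib

section
/- Let G be a topological group whose underlying topological space is Noetherian (every descending chain of closed subsets stabilizes), and let M ⊆ G be a submonoid whose underlying set is closed in G. Then M is a subgroup of G: for every m ∈ M also m⁻¹ ∈ M. -/
/-! If `m • M ⊆ M`, the closed sets `mⁿ • M` form a descending chain, which stabilises by
Noetherianity; cancelling `mⁿ` gives `m • M = M`, so `1 ∈ m • M`, i.e. `m⁻¹ ∈ M`. -/

open Pointwise

theorem TopologicalSpace.NoetherianSpace.smul_set_eq_of_smul_set_subset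
    {G X : Type*} [Group G] [MulAction G X] [TopologicalSpace X] [ContinuousConstSMul G X]
    [NoetherianSpace X] {s : Set X} (hs : IsClosed s) {g : G} (hg : g • s ⊆ s) :
    g • s = s := by
  let chain : ℕ → Closeds X := fun n => ⟨g ^ n • s, hs.smul _⟩
  have hchain : Antitone chain := antitone_nat_of_succ_le fun n => by
    change g ^ (n + 1) • s ⊆ g ^ n • s
    rw [pow_succ, mul_smul]
    exact Set.smul_set_mono hg
  obtain ⟨n, hn⟩ := WellFoundedLT.antitone_chain_condition hchain
  have hstable : g ^ n • s = g ^ n • g • s := by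
    rw [smul_smul, ← pow_succ]
    exact congrArg SetLike.coe (hn (n + 1) n.le_succ)
  exact hg.antisymm (Set.smul_set_subset_smul_set_iff.1 hstable.le)

/-- Let `G` be a topological group whose underlying space is
Noetherian, and let `M ⊆ G` be a closed submonoid. Then `M` is a subgroup:
it is closed under inversion. -/
theorem closed_submonoid_of_noetherian_topological_group_is_subgroup
    {G : Type*} [Group G] [TopologicalSpace G] [IsTopologicalGroup G]
    [TopologicalSpace.NoetherianSpace G]
    (M : Set G) (hclosed : IsClosed M)
    (hone : (1 : G) ∈ M)
    (hmul : ∀ a ∈ M, ∀ b ∈ M, a * b ∈ M) :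
    ∀ m ∈ M, m⁻¹ ∈ M := by
  intro m hm
  have hstable : m • M = M :=
    TopologicalSpace.NoetherianSpace.smul_set_eq_of_smul_set_subset hclosed
      (Set.smul_set_subset_iff.2 fun x hx => hmul m hm x hx)
  have hone_mem : (1 : G) ∈ m • M := by rwa [hstable]
  simpa using Set.mem_smul_set_iff_inv_smul_mem.1 hone_mem
end

section
/- Let k be a field, let Q be a quiver with finitely many vertices and finitely many edges, and let T₁, T₂ be two representations of Q in finite-dimensional k-vector spaces: for each vertex p finite-dimensional spaces T₁(p), T₂(p), and for each edge f : p → p' linear maps T₁(f) : T₁(p) → T₁(p') and T₂(f) : T₂(p) → T₂(p'). Let Hom(T₁,T₂) be the k-vector space of families (φ_p)_p with φ_p : T₁(p) → T₂(p) linear and φ_{p'} ∘ T₁(f) = T₂(f) ∘ φ_p for every edge f : p → p'. Let P be the quotient of the direct sum ⨁_p T₁(p) ⊗ (T₂(p))* by the subspace spanned by all elements (T₁(f)ω) ⊗ γ − ω ⊗ (γ ∘ T₂(f)), where f : p → p' is an edge, ω ∈ T₁(p), γ ∈ (T₂(p'))* (the first summand in the component of p', the second in the component of p). Then the k-linear map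 Ψ : P → (Hom(T₁,T₂))* sending the class of ω ⊗ γ in the p-component to the functional φ ↦ γ(φ_p(ω)) is well defined and is an isomorphism of k-vector spaces. -/
/-!
`Hom(T₁, T₂)` is the kernel of the defect map
`D : ∏_p Hom(T₁ p, T₂ p) → ∏_e Hom(T₁ (src e), T₂ (tgt e))`,
`φ ↦ φ_{tgt e} ∘ T₁ e - T₂ e ∘ φ_{src e}`. Over a field the dual of a kernel is the cokernel of
the dual map, `(ker D)* = (∏_p Hom(T₁ p, T₂ p))* / range D*`. Under the canonical isomorphisms
`Hom(M, N)* ≅ M ⊗ N*` on both sides, `D*` becomes the map sending `ω ⊗ γ` at an edge `e` to the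
relation `(T₁ e ω) ⊗ γ - ω ⊗ (γ ∘ T₂ e)`, so its range is exactly the subspace of relations.
-/

open TensorProduct

section

variable {k : Type*} [Field k]
variable {V E : Type*} [Fintype V] [Fintype E] [DecidableEq V]
variable (src tgt : E → V)
variable (T₁ T₂ : V → Type*)
variable [∀ p, AddCommGroup (T₁ p)] [∀ p, Module k (T₁ p)]
variable [∀ p, AddCommGroup (T₂ p)] [∀ p, Module k (T₂ p)]
variable (T₁f : ∀ e : E, T₁ (src e) →ₗ[k] T₁ (tgt e))
variable (T₂f : ∀ e : E, T₂ (src e) →ₗ[k] T₂ (tgt e))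

/-- We record once and for all that the dual spaces are additive groups (this is the
usual instance; fixing it here keeps all occurrences definitionally aligned). -/
noncomputable local instance (priority := 2000) dualACM (p : V) :
    AddCommMonoid (Module.Dual k (T₂ p)) :=
  (inferInstance : AddCommGroup (Module.Dual k (T₂ p))).toAddCommMonoid

/-- `Hom(T₁, T₂)`: the space of families `(φ_p)_p` of linear maps commuting with all
the edge maps. -/
def homRep : Submodule k (∀ p : V, T₁ p →ₗ[k] T₂ p) where
  carrier := {φ | ∀ e : E, (φ (tgt e)).comp (T₁f e) = (T₂f e).comp (φ (src e))}
  add_mem' := by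
    intro φ ψ hφ hψ e
    simp only [Pi.add_apply, LinearMap.add_comp, LinearMap.comp_add, hφ e, hψ e]
  zero_mem' := by
    intro e
    simp only [Pi.zero_apply, LinearMap.zero_comp, LinearMap.comp_zero]
  smul_mem' := by
    intro c φ hφ e
    simp only [Pi.smul_apply, LinearMap.smul_comp, LinearMap.comp_smul, hφ e]

/-- The subspace of relations inside the direct sum `⨁_p T₁(p) ⊗ (T₂(p))*`
(realized, since `V` is finite, as the product `∀ p, T₁ p ⊗ (T₂ p)*`): it is spanned
by the elements `(T₁(f)ω) ⊗ γ − ω ⊗ (γ ∘ T₂(f))` for edges `f : p → p'`, `ω ∈ T₁(p)`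
and `γ ∈ (T₂(p'))*` (the first summand sitting in the component of `p'`, the second
in the component of `p`). -/
noncomputable def relSub : Submodule k (∀ p : V, T₁ p ⊗[k] Module.Dual k (T₂ p)) :=
  Submodule.span k
    {x | ∃ (e : E) (ω : T₁ (src e)) (γ : Module.Dual k (T₂ (tgt e))),
      x = LinearMap.single k (fun p => T₁ p ⊗[k] Module.Dual k (T₂ p)) (tgt e)
            ((T₁f e ω) ⊗ₜ[k] γ)
        - LinearMap.single k (fun p => T₁ p ⊗[k] Module.Dual k (T₂ p)) (src e)
            (ω ⊗ₜ[k] (γ ∘ₗ T₂f e))}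

theorem Submodule.span_single_tmul_eq_top {R : Type*} [CommSemiring R] {ι : Type*} [Finite ι]
    [DecidableEq ι] (M N : ι → Type*) [∀ i, AddCommMonoid (M i)] [∀ i, Module R (M i)]
    [∀ i, AddCommMonoid (N i)] [∀ i, Module R (N i)] :
    Submodule.span R
      {x : ∀ i, M i ⊗[R] N i | ∃ (i : ι) (m : M i) (n : N i), x = Pi.single i (m ⊗ₜ n)} = ⊤ := by
  rw [eq_top_iff, ← LinearMap.iSup_range_single]
  refine iSup_le fun i => ?_
  rw [LinearMap.range_eq_map, ← TensorProduct.span_tmul_eq_top, Submodule.map_span_le]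
  rintro _ ⟨m, n, rfl⟩
  exact Submodule.subset_span ⟨i, m, n, rfl⟩

section TensorDual

variable (R : Type*) [CommRing R] (M N : Type*) [AddCommGroup M] [Module R M]
  [AddCommGroup N] [Module R N] [Module.Free R M] [Module.Finite R M] [Module.Free R N]
  [Module.Finite R N]

noncomputable def tensorDualEquivDualHom :
    M ⊗[R] Module.Dual R N ≃ₗ[R] Module.Dual R (M →ₗ[R] N) :=
  (TensorProduct.congr (Module.evalEquiv R M) (LinearEquiv.refl R (Module.Dual R N))).trans
    ((TensorProduct.dualDistribEquiv R (Module.Dual R M) N).trans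
      (dualTensorHomEquiv R M N).symm.dualMap)

theorem tensorDualEquivDualHom_tmul (m : M) (γ : Module.Dual R N) (f : M →ₗ[R] N) :
    tensorDualEquivDualHom R M N (m ⊗ₜ[R] γ) f = γ (f m) := by
  have hdistrib : (TensorProduct.dualDistribEquiv R (Module.Dual R M) N
        (Module.evalEquiv R M m ⊗ₜ[R] γ) : Module.Dual R M ⊗[R] N →ₗ[R] R)
      = γ ∘ₗ LinearMap.applyₗ m ∘ₗ (dualTensorHomEquiv R M N).toLinearMap := by
    refine TensorProduct.ext' fun δ n => ?_
    simp [TensorProduct.dualDistribEquiv, dualTensorHom_apply]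
  change TensorProduct.dualDistribEquiv R (Module.Dual R M) N
    (Module.evalEquiv R M m ⊗ₜ[R] γ) ((dualTensorHomEquiv R M N).symm f) = γ (f m)
  rw [hdistrib]
  simp

end TensorDual

section PiTensorDual

variable (R : Type*) [CommRing R] {ι : Type*} [Fintype ι] [DecidableEq ι] (M N : ι → Type*)
  [∀ i, AddCommGroup (M i)] [∀ i, Module R (M i)] [∀ i, Module.Free R (M i)]
  [∀ i, Module.Finite R (M i)] [∀ i, AddCommGroup (N i)] [∀ i, Module R (N i)]
  [∀ i, Module.Free R (N i)] [∀ i, Module.Finite R (N i)]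

noncomputable def piTensorDualEquivDualPiHom :
    (∀ i, M i ⊗[R] Module.Dual R (N i)) ≃ₗ[R] Module.Dual R (∀ i, M i →ₗ[R] N i) :=
  (LinearEquiv.piCongrRight fun i => tensorDualEquivDualHom R (M i) (N i)).trans
    (LinearMap.lsum R (fun i => M i →ₗ[R] N i) R)

theorem piTensorDualEquivDualPiHom_single_tmul (i : ι) (m : M i) (γ : Module.Dual R (N i))
    (φ : ∀ i, M i →ₗ[R] N i) :
    piTensorDualEquivDualPiHom R M N (Pi.single i (m ⊗ₜ[R] γ)) φ = γ (φ i m) := by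
  simp only [piTensorDualEquivDualPiHom, LinearEquiv.trans_apply, LinearMap.lsum_apply,
    LinearEquiv.piCongrRight_apply, LinearMap.coe_sum, LinearMap.coe_comp, LinearMap.coe_proj,
    Finset.sum_apply, Function.comp_apply, Function.eval]
  rw [Fintype.sum_eq_single i fun j hj => by simp [Pi.single_eq_of_ne hj], Pi.single_eq_same,
    tensorDualEquivDualHom_tmul]

end PiTensorDual

section QuiverRep

def homDefect :
    (∀ p, T₁ p →ₗ[k] T₂ p) →ₗ[k] (∀ e : E, T₁ (src e) →ₗ[k] T₂ (tgt e)) :=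
  LinearMap.pi fun e =>
    (LinearMap.lcomp k (T₂ (tgt e)) (T₁f e)) ∘ₗ LinearMap.proj (tgt e)
      - (LinearMap.llcomp k (T₁ (src e)) (T₂ (src e)) (T₂ (tgt e)) (T₂f e)) ∘ₗ
          LinearMap.proj (src e)

omit [Fintype V] [Fintype E] [DecidableEq V] in
theorem homDefect_apply (φ : ∀ p, T₁ p →ₗ[k] T₂ p) (e : E) :
    homDefect src tgt T₁ T₂ T₁f T₂f φ e = φ (tgt e) ∘ₗ T₁f e - T₂f e ∘ₗ φ (src e) :=
  rfl

omit [Fintype V] [Fintype E] [DecidableEq V] in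
theorem homRep_eq_ker_homDefect :
    homRep src tgt T₁ T₂ T₁f T₂f = LinearMap.ker (homDefect src tgt T₁ T₂ T₁f T₂f) := by
  ext φ
  simp only [LinearMap.mem_ker, funext_iff, homDefect_apply, Pi.zero_apply, sub_eq_zero]
  rfl

noncomputable def relMap :
    (∀ e : E, T₁ (src e) ⊗[k] Module.Dual k (T₂ (tgt e)))
      →ₗ[k] ∀ p, T₁ p ⊗[k] Module.Dual k (T₂ p) :=
  ∑ e, (LinearMap.single k (fun p => T₁ p ⊗[k] Module.Dual k (T₂ p)) (tgt e) ∘ₗ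
        TensorProduct.map (T₁f e) LinearMap.id
      - LinearMap.single k (fun p => T₁ p ⊗[k] Module.Dual k (T₂ p)) (src e) ∘ₗ
        TensorProduct.map LinearMap.id (T₂f e).dualMap) ∘ₗ LinearMap.proj e

omit [Fintype V] in
theorem relMap_single_tmul [DecidableEq E] (e : E) (ω : T₁ (src e))
    (γ : Module.Dual k (T₂ (tgt e))) :
    relMap src tgt T₁ T₂ T₁f T₂f (Pi.single e (ω ⊗ₜ γ))
      = LinearMap.single k (fun p => T₁ p ⊗[k] Module.Dual k (T₂ p)) (tgt e)
            ((T₁f e ω) ⊗ₜ[k] γ)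
        - LinearMap.single k (fun p => T₁ p ⊗[k] Module.Dual k (T₂ p)) (src e)
            (ω ⊗ₜ[k] (γ ∘ₗ T₂f e)) := by
  rw [relMap, LinearMap.sum_apply,
    Fintype.sum_eq_single e fun d hd => by simp [Pi.single_eq_of_ne hd]]
  simp only [LinearMap.coe_comp, LinearMap.coe_proj, Function.comp_apply, Function.eval,
    Pi.single_eq_same, LinearMap.sub_apply, LinearMap.coe_single, map_tmul, LinearMap.id_coe,
    id_eq]
  rfl

omit [Fintype V] in
theorem range_relMap :
    LinearMap.range (relMap src tgt T₁ T₂ T₁f T₂f) = relSub src tgt T₁ T₂ T₁f T₂f := by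
  classical
  rw [LinearMap.range_eq_map, ← Submodule.span_single_tmul_eq_top, Submodule.map_span, relSub]
  congr 1
  ext x
  simp [relMap_single_tmul, @eq_comm _ x]

variable [∀ p, FiniteDimensional k (T₁ p)] [∀ p, FiniteDimensional k (T₂ p)]

theorem dualMap_homDefect_comp [DecidableEq E] :
    (homDefect src tgt T₁ T₂ T₁f T₂f).dualMap ∘ₗ
        (piTensorDualEquivDualPiHom k (fun e => T₁ (src e)) (fun e => T₂ (tgt e))).toLinearMap
      = (piTensorDualEquivDualPiHom k T₁ T₂).toLinearMap ∘ₗ relMap src tgt T₁ T₂ T₁f T₂f := by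
  ext e ω γ φ
  simp [relMap_single_tmul, piTensorDualEquivDualPiHom_single_tmul, homDefect_apply]

noncomputable def periodMap :
    (∀ p, T₁ p ⊗[k] Module.Dual k (T₂ p)) →ₗ[k] Module.Dual k (homRep src tgt T₁ T₂ T₁f T₂f) :=
  (homRep src tgt T₁ T₂ T₁f T₂f).dualRestrict ∘ₗ (piTensorDualEquivDualPiHom k T₁ T₂).toLinearMap

omit [Fintype E] in
theorem periodMap_single_tmul (p : V) (ω : T₁ p) (γ : Module.Dual k (T₂ p))
    (φ : homRep src tgt T₁ T₂ T₁f T₂f) :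
    periodMap src tgt T₁ T₂ T₁f T₂f (Pi.single p (ω ⊗ₜ γ)) φ
      = γ ((φ : ∀ p, T₁ p →ₗ[k] T₂ p) p ω) :=
  piTensorDualEquivDualPiHom_single_tmul k T₁ T₂ p ω γ φ

omit [Fintype E] in
theorem periodMap_surjective : Function.Surjective (periodMap src tgt T₁ T₂ T₁f T₂f) :=
  (Subspace.dualRestrict_leftInverse _).surjective.comp (LinearEquiv.surjective _)

theorem ker_periodMap :
    LinearMap.ker (periodMap src tgt T₁ T₂ T₁f T₂f) = relSub src tgt T₁ T₂ T₁f T₂f := by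
  classical
  set ε := piTensorDualEquivDualPiHom k T₁ T₂
  have hrange : LinearMap.range (homDefect src tgt T₁ T₂ T₁f T₂f).dualMap
      = (relSub src tgt T₁ T₂ T₁f T₂f).map ε.toLinearMap := by
    rw [← range_relMap, ← LinearMap.range_comp, ← dualMap_homDefect_comp,
      LinearMap.range_comp_of_range_eq_top _ (LinearEquiv.range _)]
  rw [periodMap, LinearMap.ker_comp, Submodule.dualRestrict_ker_eq_dualAnnihilator,
    homRep_eq_ker_homDefect, ← LinearMap.range_dualMap_eq_dualAnnihilator_ker, hrange]
  exact Submodule.comap_map_eq_of_injective ε.injective _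

end QuiverRep

/-- Let `k` be a field, `Q` a finite quiver, and `T₁`, `T₂` two
representations of `Q` in finite-dimensional `k`-vector spaces. Let
`P = (⨁_p T₁(p) ⊗ (T₂(p))*) / relations`. Then the map
`Ψ : P → (Hom(T₁,T₂))*`, sending the class of `ω ⊗ γ` (in the `p`-component)
to the functional `φ ↦ γ(φ_p(ω))`, is well defined and is an isomorphism of
`k`-vector spaces. -/
theorem period_pairing_iso
    [∀ p, FiniteDimensional k (T₁ p)] [∀ p, FiniteDimensional k (T₂ p)] :
    ∃ Ψ : ((∀ p : V, T₁ p ⊗[k] Module.Dual k (T₂ p)) ⧸ relSub src tgt T₁ T₂ T₁f T₂f)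
            →ₗ[k] Module.Dual k (homRep src tgt T₁ T₂ T₁f T₂f),
      (∀ (p : V) (ω : T₁ p) (γ : Module.Dual k (T₂ p))
          (φ : homRep src tgt T₁ T₂ T₁f T₂f),
        Ψ (Submodule.Quotient.mk
            (LinearMap.single k (fun p => T₁ p ⊗[k] Module.Dual k (T₂ p)) p
              (ω ⊗ₜ[k] γ))) φ
          = γ (((φ : ∀ p : V, T₁ p →ₗ[k] T₂ p) p) ω)) ∧
      Function.Bijective Ψ := by
  have hker := ker_periodMap src tgt T₁ T₂ T₁f T₂f
  refine ⟨(relSub src tgt T₁ T₂ T₁f T₂f).liftQ _ hker.ge,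
    periodMap_single_tmul src tgt T₁ T₂ T₁f T₂f, ?_, ?_⟩
  · rw [← LinearMap.ker_eq_bot]
    exact Submodule.ker_liftQ_eq_bot' _ _ hker.symm
  · rw [← LinearMap.range_eq_top, Submodule.range_liftQ, LinearMap.range_eq_top]
    exact periodMap_surjective src tgt T₁ T₂ T₁f T₂f

end
end
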